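/- There exist constants c₁, c₂, c₃ > 0 such that for all integers n > 1, σ with 2 ≤ σ ≤ n, and z with σ ≤ z ≤ n/log_σ n, there is a string s of length n over an alphabet of size σ whose LZ parsing size Zov satisfies c₁·z ≤ Zov ≤ c₂·z and whose novLZ parsing size Znon satisfies Znon ≥ c₃ · z · log₂(n / (z · log_σ z)). -/

import Mathlib

attribute [local instance] Classical.propDecidable

/-- `PermOv s i ℓ` : the substring of `s` of length `ℓ` starting at 0-indexed position `i`
has an occurrence starting at some earlier position `j < i` (possibly overlapping it). -/
def PermOv {α : Type*} (s : List α) (i ℓ : ℕ) : Prop :=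
  ∃ j < i, (s.drop j).take ℓ = (s.drop i).take ℓ

/-- `PermNov s i ℓ` : the substring of `s` of length `ℓ` starting at 0-indexed position `i`
has an occurrence starting at some position `j` with `j + ℓ ≤ i` (not overlapping it). -/
def PermNov {α : Type*} (s : List α) (i ℓ : ℕ) : Prop :=
  ∃ j, j + ℓ ≤ i ∧ (s.drop j).take ℓ = (s.drop i).take ℓ

/-- `PermOv3 s i ℓ` : the substring of `s` of length `ℓ - 1` starting at 0-indexed position `i`
(i.e. the phrase of length `ℓ` starting at `i` minus its last letter) has an occurrence
starting at some earlier position `j < i` (possibly overlapping). -/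
def PermOv3 {α : Type*} (s : List α) (i ℓ : ℕ) : Prop :=
  ∃ j < i, (s.drop j).take (ℓ - 1) = (s.drop i).take (ℓ - 1)

/-- `PermNov3 s i ℓ` : the substring of `s` of length `ℓ - 1` starting at 0-indexed position `i`
has an occurrence starting at some position `j` with `j + (ℓ - 1) ≤ i` (so this occurrence
ends before position `i`). -/
def PermNov3 {α : Type*} (s : List α) (i ℓ : ℕ) : Prop :=
  ∃ j, j + (ℓ - 1) ≤ i ∧ (s.drop j).take (ℓ - 1) = (s.drop i).take (ℓ - 1)

/-- Length of the greedy phrase starting at 0-indexed position `i`: the largest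
`ℓ ≤ |s| - i` permitted by `P`, or `1` (a single letter) if no length is permitted. -/
noncomputable def phraseLen {α : Type*} (P : List α → ℕ → ℕ → Prop) (s : List α) (i : ℕ) : ℕ :=
  max 1 (Nat.findGreatest (fun ℓ => P s i ℓ) (s.length - i))

/-- The list of phrases of the greedy parsing (w.r.t. the permission predicate `P`)
of the suffix of `s` starting at 0-indexed position `i`. -/
noncomputable def phrasesFrom {α : Type*} (P : List α → ℕ → ℕ → Prop) (s : List α) (i : ℕ) :
    List (List α) :=
  if _h : i < s.length then
    (s.drop i).take (phraseLen P s i) :: phrasesFrom P s (i + phraseLen P s i)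
  else []
  termination_by s.length - i
  decreasing_by
    have h1 : 1 ≤ phraseLen P s i := by unfold phraseLen; exact Nat.le_max_left _ _
    omega

/-- The LZ parsing of `s` (phrases may overlap their earlier occurrences). -/
noncomputable def lzPhrases {α : Type*} (s : List α) : List (List α) := phrasesFrom PermOv s 0
/-- The novLZ parsing of `s` (earlier occurrences may not overlap the phrases). -/
noncomputable def novlzPhrases {α : Type*} (s : List α) : List (List α) := phrasesFrom PermNov s 0
/-- The LZ3 parsing of `s`. -/
noncomputable def lz3Phrases {α : Type*} (s : List α) : List (List α) := phrasesFrom PermOv3 s 0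
/-- The novLZ3 parsing of `s`. -/
noncomputable def novlz3Phrases {α : Type*} (s : List α) : List (List α) := phrasesFrom PermNov3 s 0

/-- `Zov`: the size (number of phrases) of the LZ parsing of `s`. -/
noncomputable def zOv {α : Type*} (s : List α) : ℕ := (lzPhrases s).length
/-- `Znon`: the size of the novLZ parsing of `s`. -/
noncomputable def zNov {α : Type*} (s : List α) : ℕ := (novlzPhrases s).length
/-- `Zov₃`: the size of the LZ3 parsing of `s`. -/
noncomputable def zOv3 {α : Type*} (s : List α) : ℕ := (lz3Phrases s).length
/-- `Znon₃`: the size of the novLZ3 parsing of `s`. -/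
noncomputable def zNov3 {α : Type*} (s : List α) : ℕ := (novlz3Phrases s).length

/-- `ts` is an LZ-type parsing of `s`: a decomposition of `s` into nonempty strings such that
each `tᵢ` is a single letter or occurs in `s[1..|t₁⋯tᵢ|-1]`. -/
def IsLZTypeParsing {α : Type*} (s : List α) (ts : List (List α)) : Prop :=
  ts.flatten = s ∧ (∀ t ∈ ts, t ≠ []) ∧
    ∀ i (h : i < ts.length),
      ts[i].length = 1 ∨ ts[i] <:+: s.take ((ts.take (i + 1)).flatten.length - 1)

/-- `ts` is a novLZ-type parsing of `s`: a decomposition of `s` into nonempty strings such that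
each `tᵢ` is a single letter or occurs in `t₁⋯tᵢ₋₁`. -/
def IsNovLZTypeParsing {α : Type*} (s : List α) (ts : List (List α)) : Prop :=
  ts.flatten = s ∧ (∀ t ∈ ts, t ≠ []) ∧
    ∀ i (h : i < ts.length),
      ts[i].length = 1 ∨ ts[i] <:+: (ts.take i).flatten

/-- `ts` is an LZ3-type parsing of `s`: a decomposition of `s` into nonempty strings such that
each `tᵢ` minus its last letter occurs in `s[1..|t₁⋯tᵢ|-2]`. -/
def IsLZ3TypeParsing {α : Type*} (s : List α) (ts : List (List α)) : Prop :=
  ts.flatten = s ∧ (∀ t ∈ ts, t ≠ []) ∧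
    ∀ i (h : i < ts.length),
      ts[i].dropLast <:+: s.take ((ts.take (i + 1)).flatten.length - 2)

/-- `ts` is a novLZ3-type parsing of `s`: a decomposition of `s` into nonempty strings such that
each `tᵢ` minus its last letter occurs in `t₁⋯tᵢ₋₁`. -/
def IsNovLZ3TypeParsing {α : Type*} (s : List α) (ts : List (List α)) : Prop :=
  ts.flatten = s ∧ (∀ t ∈ ts, t ≠ []) ∧
    ∀ i (h : i < ts.length),
      ts[i].dropLast <:+: (ts.take i).flatten

/-!
The witness is a string of `q ≈ z / 100` blocks over a period `p = 2m + 3`, `m ≈ log_σ z`: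
block `x` repeats `k ≈ n / (q p)` times the codeword `0 0 1 d₀ 1 d₁ ⋯ 1 dₘ₋₁ 1` of the digits
of `x`. Since `0 0` occurs only at codeword starts and the digits determine `x`, the first codeword
of a block occurs nowhere earlier, so no phrase of any LZ-like parsing crosses it: `q ≤ Zov`.
Conversely LZ parses each block with four phrases (a prefix shared with the codeword of `x - 1`, one
digit, a suffix shared with the codeword of `0`, and one self-overlapping copy of the rest of the
block), and the greedy parsing is optimal, so `Zov ≤ 6q`. Without overlaps a phrase inside a block
cannot reach further than about twice its distance from the block start, so every block needs
`≈ log₂ k` novLZ phrases, and `q log₂ k ≈ z log₂ (n / (z log_σ z))`.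
-/

section GreedyParsing

variable {α : Type*} (P : List α → ℕ → ℕ → Prop) (s : List α)

theorem one_le_phraseLen (i : ℕ) : 1 ≤ phraseLen P s i :=
  le_max_left _ _

theorem phraseLen_le (i : ℕ) : phraseLen P s i ≤ max 1 (s.length - i) :=
  max_le_max le_rfl (Nat.findGreatest_le _)

theorem le_phraseLen {i ℓ : ℕ} (hℓ : i + ℓ ≤ s.length) (h : P s i ℓ) : ℓ ≤ phraseLen P s i :=
  (Nat.le_findGreatest (by omega) h).trans (le_max_right _ _)

theorem phraseLen_spec {i : ℕ} (h : 2 ≤ phraseLen P s i) : P s i (phraseLen P s i) := by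
  have hfg : phraseLen P s i = Nat.findGreatest (fun ℓ => P s i ℓ) (s.length - i) := by
    unfold phraseLen at h ⊢; omega
  exact Nat.findGreatest_of_ne_zero hfg.symm (by omega)

theorem phrasesFrom_of_length_le {i : ℕ} (h : s.length ≤ i) : phrasesFrom P s i = [] := by
  rw [phrasesFrom, dif_neg (by omega)]

theorem length_phrasesFrom_of_lt {i : ℕ} (h : i < s.length) :
    (phrasesFrom P s i).length = (phrasesFrom P s (i + phraseLen P s i)).length + 1 := by
  rw [phrasesFrom, dif_pos h, List.length_cons]

theorem length_phrasesFrom_le (i : ℕ) : (phrasesFrom P s i).length ≤ s.length - i := by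
  induction i using phrasesFrom.induct P s with
  | case1 i hi ih =>
    have := one_le_phraseLen P s i
    rw [length_phrasesFrom_of_lt P s hi]; omega
  | case2 i hi => simp [phrasesFrom_of_length_le P s (not_lt.mp hi)]

theorem one_le_length_phrasesFrom {i : ℕ} (h : i < s.length) :
    1 ≤ (phrasesFrom P s i).length := by
  rw [length_phrasesFrom_of_lt P s h]; omega

theorem exists_phrase_covering {c : ℕ} (hc : c < s.length) (g : ℕ) (hg : g ≤ c) :
    ∃ u, g ≤ u ∧ u ≤ c ∧ c < u + phraseLen P s u ∧
      (phrasesFrom P s u).length ≤ (phrasesFrom P s g).length := by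
  induction g using phrasesFrom.induct P s with
  | case1 g hgs ih =>
    by_cases hcov : c < g + phraseLen P s g
    · exact ⟨g, le_rfl, hg, hcov, le_rfl⟩
    · obtain ⟨u, hu, huc, hcu, hlen⟩ := ih (by omega)
      have := length_phrasesFrom_of_lt P s hgs
      exact ⟨u, by omega, huc, hcu, by omega⟩
  | case2 g hgs => omega

theorem mul_le_length_phrasesFrom {q K r : ℕ} (h : ∀ x < q, ∀ g ≤ x * K, ∃ w ≤ (x + 1) * K,
      (phrasesFrom P s w).length + r ≤ (phrasesFrom P s g).length) :
    q * r ≤ (phrasesFrom P s 0).length := by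
  suffices ∀ d x, x + d = q → ∀ g ≤ x * K, d * r ≤ (phrasesFrom P s g).length from
    this q 0 (by omega) 0 (by omega)
  intro d
  induction d with
  | zero => intros; simp
  | succ d ih =>
    intro x hxd g hg
    obtain ⟨w, hw, hlen⟩ := h x (by omega) g hg
    have := ih (x + 1) (by omega) w hw
    rw [Nat.succ_mul]
    omega

end GreedyParsing

section Optimality

variable {α : Type*}

/-- `IsParsing P s a b r`: the segment `s[a, b)` is cut into `r` consecutive pieces, each a
single letter or permitted by `P`. -/
inductive IsParsing (P : List α → ℕ → ℕ → Prop) (s : List α) : ℕ → ℕ → ℕ → Prop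
  | nil (a : ℕ) : IsParsing P s a a 0
  | cons {a ℓ b r : ℕ} :
      (ℓ = 1 ∨ P s a ℓ) → IsParsing P s (a + ℓ) b r → IsParsing P s a b (r + 1)

variable {P : List α → ℕ → ℕ → Prop} {s : List α}

theorem IsParsing.trans {a b c r r' : ℕ} (h : IsParsing P s a b r) (h' : IsParsing P s b c r') :
    IsParsing P s a c (r + r') := by
  induction h with
  | nil => simpa using h'
  | cons hℓ _ ih => rw [Nat.add_right_comm]; exact .cons hℓ (ih h')

theorem IsParsing.letters (a d : ℕ) : IsParsing P s a (a + d) d := by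
  induction d generalizing a with
  | zero => exact .nil a
  | succ d ih =>
    exact .cons (.inl rfl) (by rw [← Nat.add_assoc, Nat.add_right_comm]; exact ih (a + 1))

theorem IsParsing.le {a b r : ℕ} (h : IsParsing P s a b r) : a ≤ b := by
  induction h <;> omega

theorem IsParsing.single {a ℓ : ℕ} (h : P s a ℓ) : IsParsing P s a (a + ℓ) 1 :=
  .cons (.inr h) (.nil _)

theorem PermOv.drop {a ℓ g : ℕ} (h : PermOv s a ℓ) (hg : a ≤ g) : PermOv s g (a + ℓ - g) := by
  obtain ⟨j, hj, hseg⟩ := h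
  refine ⟨j + (g - a), by omega, ?_⟩
  have := congrArg (List.drop (g - a)) hseg
  rwa [List.drop_take, List.drop_take, List.drop_drop, List.drop_drop,
    show a + (g - a) = g by omega, show ℓ - (g - a) = a + ℓ - g by omega] at this

theorem PermNov.permOv {i ℓ : ℕ} (h : PermNov s i ℓ) (hℓ : 0 < ℓ) : PermOv s i ℓ := by
  obtain ⟨j, hj, hseg⟩ := h
  exact ⟨j, by omega, hseg⟩

/-- A suffix of an LZ phrase is again an LZ phrase, so the greedy parsing never falls behind any
other parsing. -/
theorem IsParsing.length_phrasesFrom_le {a r : ℕ} (h : IsParsing PermOv s a s.length r) {g : ℕ}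
    (hg : a ≤ g) : (phrasesFrom PermOv s g).length ≤ r := by
  generalize hb : s.length = b at h
  induction h generalizing g with
  | nil a => simp [phrasesFrom_of_length_le PermOv s (hb ▸ hg : s.length ≤ g)]
  | @cons a ℓ b r hℓ hrest ih =>
    by_cases hnext : a + ℓ ≤ g
    · exact (ih hnext hb).trans (Nat.le_succ r)
    · have hgs : g < s.length := by have := hrest.le; omega
      have hcover : a + ℓ - g ≤ phraseLen PermOv s g := by
        rcases hℓ with rfl | hP
        · have := one_le_phraseLen PermOv s g; omega
        · exact le_phraseLen _ _ (by have := hrest.le; omega) (hP.drop hg)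
      have := length_phrasesFrom_of_lt PermOv s hgs
      have := ih (g := g + phraseLen PermOv s g) (by omega) hb
      omega

end Optimality

theorem List.getElem?_add_eq_of_take_drop_eq {α : Type*} {l : List α} {u v ℓ t : ℕ}
    (h : (l.drop v).take ℓ = (l.drop u).take ℓ) (ht : t < ℓ) : l[v + t]? = l[u + t]? := by
  simpa [List.getElem?_take, ht, List.getElem?_drop] using congrArg (·[t]?) h

theorem List.take_drop_eq_of_getElem?_add_eq {α : Type*} {l : List α} {u v ℓ : ℕ}
    (h : ∀ t < ℓ, l[v + t]? = l[u + t]?) : (l.drop v).take ℓ = (l.drop u).take ℓ :=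
  List.ext_getElem? fun t => by
    simp only [List.getElem?_take, List.getElem?_drop]
    split_ifs with ht
    exacts [h t ht, rfl]

theorem Nat.exists_add_eq_mul_of_pos {u p : ℕ} (hp : 0 < p) :
    ∃ o i, o < p ∧ u + o = i * p := by
  rcases Nat.eq_zero_or_pos (u % p) with h | h
  · exact ⟨0, u / p, hp, by rw [Nat.add_zero, Nat.div_mul_cancel (Nat.dvd_of_mod_eq_zero h)]⟩
  · refine ⟨p - u % p, u / p + 1, by omega, ?_⟩
    have := Nat.div_add_mod' u p
    have := Nat.mod_lt u hp
    rw [Nat.succ_mul]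
    omega

namespace BlockString

variable {σ m q k n : ℕ}

def digit (σ m x c : ℕ) : ℕ := x / σ ^ (m - 1 - c) % σ

theorem eq_of_digit_eq {x y : ℕ} (hx : x < σ ^ m) (hy : y < σ ^ m)
    (h : ∀ c < m, digit σ m x c = digit σ m y c) : x = y := by
  have hmod : ∀ e ≤ m, x % σ ^ e = y % σ ^ e := by
    intro e he
    induction e with
    | zero => simp [Nat.mod_one]
    | succ e ih =>
      have hc := h (m - 1 - e) (by omega)
      rw [digit, digit, show m - 1 - (m - 1 - e) = e by omega] at hc
      rw [Nat.mod_pow_succ, Nat.mod_pow_succ, ih (by omega), hc]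
  simpa [Nat.mod_eq_of_lt hx, Nat.mod_eq_of_lt hy] using hmod m le_rfl

theorem digit_eq_zero {x e c : ℕ} (hσ : 0 < σ) (hdvd : σ ^ e ∣ x) (hc : m - 1 - c < e) :
    digit σ m x c = 0 := by
  obtain ⟨w, rfl⟩ := (pow_dvd_pow σ (show m - 1 - c + 1 ≤ e by omega)).trans hdvd
  rw [digit, pow_succ, Nat.mul_assoc, Nat.mul_div_cancel_left _ (by positivity), Nat.mul_mod_right]

theorem digit_sub_one {x e c : ℕ} (hσ : 2 ≤ σ) (hndvd : ¬σ ^ (e + 1) ∣ x)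
    (hc : e < m - 1 - c) : digit σ m (x - 1) c = digit σ m x c := by
  have hx : x ≠ 0 := by rintro rfl; exact hndvd (dvd_zero _)
  have hj : ¬σ ^ (m - 1 - c) ∣ x := fun h =>
    hndvd ((Nat.pow_dvd_pow_iff_le_right (by omega)).mpr (by omega) |>.trans h)
  have := Nat.succ_div (a := x - 1) (b := σ ^ (m - 1 - c))
  rw [Nat.sub_add_cancel (by omega), if_neg hj] at this
  rw [digit, digit, this, Nat.add_zero]

/-- Letter `j` of the codeword `0 0 1 d₀ 1 d₁ ⋯ 1 dₘ₋₁ 1` of `x`, where `dᵢ = digit σ m x i`. -/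
def codeword (σ m x j : ℕ) : ℕ :=
  if j < 2 then 0
  else if j = 2 * m + 2 then 1
  else if j % 2 = 0 then 1
  else digit σ m x ((j - 3) / 2)

theorem codeword_lt (hσ : 2 ≤ σ) (x j : ℕ) : codeword σ m x j < σ := by
  unfold codeword digit
  split_ifs
  any_goals omega
  exact Nat.mod_lt _ (by omega)

theorem codeword_of_lt_two {x j : ℕ} (hj : j < 2) : codeword σ m x j = 0 := by
  simp [codeword, hj]

theorem codeword_of_even {x j : ℕ} (hj : 2 ≤ j) (he : j % 2 = 0) : codeword σ m x j = 1 := by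
  unfold codeword; split_ifs <;> omega

theorem codeword_two_mul_add_three (x c : ℕ) : codeword σ m x (2 * c + 3) = digit σ m x c := by
  unfold codeword
  rw [if_neg (by omega), if_neg (by omega), if_neg (by omega)]
  congr 1
  omega

theorem eq_zero_of_codeword_eq_zero {x j : ℕ} (hj : j + 1 < 2 * m + 3)
    (h₀ : codeword σ m x j = 0) (h₁ : codeword σ m x (j + 1) = 0) : j = 0 := by
  unfold codeword at h₀ h₁
  split_ifs at h₀ h₁ <;> omega

theorem codeword_eq_of_digit_eq {x y j : ℕ}
    (h : ∀ c, j = 2 * c + 3 → digit σ m x c = digit σ m y c) :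
    codeword σ m x j = codeword σ m y j := by
  unfold codeword
  split_ifs
  exacts [rfl, rfl, rfl, h _ (by omega)]

theorem codeword_sub_one {x e j : ℕ} (hσ : 2 ≤ σ) (hndvd : ¬σ ^ (e + 1) ∣ x)
    (hj : j < 2 * (m - 1 - e) + 3) : codeword σ m (x - 1) j = codeword σ m x j :=
  codeword_eq_of_digit_eq fun c hc => digit_sub_one hσ hndvd (by omega)

theorem codeword_zero {x e j : ℕ} (hσ : 0 < σ) (hdvd : σ ^ e ∣ x) (hj : 2 * (m - e) + 2 ≤ j)
    (hj' : j < 2 * m + 3) : codeword σ m 0 j = codeword σ m x j :=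
  codeword_eq_of_digit_eq fun c hc => by
    rw [digit_eq_zero hσ hdvd (by omega), digit, Nat.zero_div, Nat.zero_mod]

def blockOf (q k i : ℕ) : ℕ := min (i / k) (q - 1)

theorem blockOf_eq {x i : ℕ} (hx : x < q) (h₁ : x * k ≤ i) (h₂ : i < x * k + k) :
    blockOf q k i = x := by
  have : i / k = x := Nat.div_eq_of_lt_le h₁ (by rw [Nat.add_mul, one_mul]; exact h₂)
  rw [blockOf, this]
  omega

theorem blockOf_eq_of_le {i : ℕ} (hk : 0 < k) (h : (q - 1) * k ≤ i) : blockOf q k i = q - 1 :=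
  min_eq_right ((Nat.le_div_iff_mul_le hk).mpr h)

theorem blockOf_lt (hq : 1 ≤ q) (i : ℕ) : blockOf q k i < q := by
  unfold blockOf; omega

/-- The string consists of `q` blocks, block `x` being `k` copies of the codeword of `x` (of length
`2 * m + 3`); the last block is continued periodically. -/
def letterAt (σ m q k v : ℕ) : ℕ :=
  codeword σ m (blockOf q k (v / (2 * m + 3))) (v % (2 * m + 3))

theorem letterAt_lt (hσ : 2 ≤ σ) (v : ℕ) : letterAt σ m q k v < σ :=
  codeword_lt hσ _ _

theorem letterAt_mul_add {i j : ℕ} (hj : j < 2 * m + 3) :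
    letterAt σ m q k (i * (2 * m + 3) + j) = codeword σ m (blockOf q k i) j := by
  rw [letterAt, mul_comm, Nat.mul_add_div (by omega), Nat.div_eq_of_lt hj, Nat.mul_add_mod,
    Nat.mod_eq_of_lt hj, Nat.add_zero]

theorem letterAt_of_mem_block (hk : 0 < k) {x v : ℕ} (hx : x < q)
    (h₁ : x * k * (2 * m + 3) ≤ v) (h₂ : v < x * k * (2 * m + 3) + k * (2 * m + 3) ∨ x + 1 = q) :
    letterAt σ m q k v = codeword σ m x (v % (2 * m + 3)) := by
  have hi : x * k ≤ v / (2 * m + 3) := (Nat.le_div_iff_mul_le (by omega)).mpr h₁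
  rw [letterAt]
  congr 1
  rcases h₂ with h₂ | h₂
  · refine blockOf_eq hx hi ((Nat.div_lt_iff_lt_mul (by omega)).mpr ?_)
    rwa [Nat.add_mul]
  · obtain rfl : x = q - 1 := by omega
    exact blockOf_eq_of_le hk hi

theorem mod_eq_zero_of_letterAt_eq_zero {v : ℕ} (h₀ : letterAt σ m q k v = 0)
    (h₁ : letterAt σ m q k (v + 1) = 0) : v % (2 * m + 3) = 0 := by
  have hv : v / (2 * m + 3) * (2 * m + 3) + v % (2 * m + 3) = v := Nat.div_add_mod' v _
  have hj : v % (2 * m + 3) < 2 * m + 3 := Nat.mod_lt _ (by omega)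
  rw [← hv, letterAt_mul_add hj] at h₀
  by_cases hlast : v % (2 * m + 3) = 2 * m + 2
  · rw [hlast, codeword_of_even (by omega) (by omega)] at h₀
    exact absurd h₀ one_ne_zero
  · rw [← hv, add_assoc, letterAt_mul_add (by omega)] at h₁
    exact eq_zero_of_codeword_eq_zero (by omega) h₀ h₁

/-- The codeword digits identify the block, and a codeword can only start at a multiple of the
period since `0 0` occurs nowhere else. -/
theorem mul_le_of_letterAt_eq (hqm : q ≤ σ ^ m) {x i v : ℕ} (hx : x < q)
    (hi : blockOf q k i = x)
    (h : ∀ t < 2 * m + 3, letterAt σ m q k (v + t) = letterAt σ m q k (i * (2 * m + 3) + t)) :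
    x * k * (2 * m + 3) ≤ v := by
  have hword : ∀ t < 2 * m + 3, letterAt σ m q k (v + t) = codeword σ m x t := fun t ht => by
    rw [h t ht, letterAt_mul_add ht, hi]
  obtain ⟨i', rfl⟩ : ∃ i', v = i' * (2 * m + 3) := by
    have h₀ := hword 0 (by omega)
    have h₁ := hword 1 (by omega)
    rw [codeword_of_lt_two (by omega)] at h₀ h₁
    have := mod_eq_zero_of_letterAt_eq_zero (by simpa using h₀) h₁
    exact ⟨_, (Nat.div_mul_cancel (Nat.dvd_of_mod_eq_zero this)).symm⟩
  have hblock : blockOf q k i' = x := by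
    refine eq_of_digit_eq ((blockOf_lt (by omega) _).trans_le hqm) (hx.trans_le hqm) fun c hc => ?_
    have := hword (2 * c + 3) (by omega)
    rwa [letterAt_mul_add (by omega), codeword_two_mul_add_three,
      codeword_two_mul_add_three] at this
  have : x ≤ i' / k := by unfold blockOf at hblock; omega
  exact Nat.mul_le_mul_right _ ((Nat.mul_le_mul_right k this).trans (Nat.div_mul_le_self i' k))

theorem add_mul_le_of_lt {x : ℕ} (hx : x < q) (hn : q * k * (2 * m + 3) ≤ n) :
    x * k * (2 * m + 3) + k * (2 * m + 3) ≤ n := by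
  have := Nat.mul_le_mul_right (k * (2 * m + 3)) (Nat.succ_le_of_lt hx)
  rw [Nat.succ_mul] at this
  simpa only [Nat.mul_assoc] using this.trans (by rw [← Nat.mul_assoc]; exact hn)

def blockEnd (m q k n x : ℕ) : ℕ := if x + 1 = q then n else (x + 1) * k * (2 * m + 3)

theorem blockEnd_le {x : ℕ} (hx : x < q) (hn : q * k * (2 * m + 3) ≤ n) :
    blockEnd m q k n x ≤ n := by
  unfold blockEnd
  split_ifs
  · rfl
  · exact (Nat.mul_le_mul_right _ (Nat.mul_le_mul_right _ hx)).trans hn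

theorem add_mul_le_blockEnd {x : ℕ} (hx : x < q) (hn : q * k * (2 * m + 3) ≤ n) :
    x * k * (2 * m + 3) + k * (2 * m + 3) ≤ blockEnd m q k n x := by
  unfold blockEnd
  split_ifs
  · exact add_mul_le_of_lt hx hn
  · rw [Nat.add_mul, Nat.add_mul, Nat.one_mul]

def blockString (σ m q k n : ℕ) (hσ : 2 ≤ σ) : List (Fin σ) :=
  List.ofFn fun v : Fin n => ⟨letterAt σ m q k v, letterAt_lt hσ v⟩

theorem length_blockString (hσ : 2 ≤ σ) : (blockString σ m q k n hσ).length = n :=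
  List.length_ofFn

theorem getElem?_blockString (hσ : 2 ≤ σ) {v : ℕ} (hv : v < n) :
    (blockString σ m q k n hσ)[v]? = some ⟨letterAt σ m q k v, letterAt_lt hσ v⟩ := by
  simp [blockString, hv]

theorem letterAt_eq_of_take_drop_eq (hσ : 2 ≤ σ) {u v ℓ : ℕ} (hu : u + ℓ ≤ n)
    (h : ((blockString σ m q k n hσ).drop v).take ℓ = ((blockString σ m q k n hσ).drop u).take ℓ)
    {t : ℕ} (ht : t < ℓ) : letterAt σ m q k (v + t) = letterAt σ m q k (u + t) := by
  have := List.getElem?_add_eq_of_take_drop_eq h ht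
  rw [getElem?_blockString hσ (show u + t < n by omega)] at this
  by_cases hv : v + t < n
  · simpa [getElem?_blockString hσ hv] using this
  · simp [blockString, hv] at this

theorem take_drop_eq_of_letterAt_eq (hσ : 2 ≤ σ) {u v ℓ : ℕ} (hu : u + ℓ ≤ n) (hv : v + ℓ ≤ n)
    (h : ∀ t < ℓ, letterAt σ m q k (v + t) = letterAt σ m q k (u + t)) :
    ((blockString σ m q k n hσ).drop v).take ℓ = ((blockString σ m q k n hσ).drop u).take ℓ :=
  List.take_drop_eq_of_getElem?_add_eq fun t ht => by
    simp [getElem?_blockString hσ (show v + t < n by omega),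
      getElem?_blockString hσ (show u + t < n by omega), h t ht]

variable (hσ : 2 ≤ σ)

theorem add_phraseLen_le_of_two_le (P : List (Fin σ) → ℕ → ℕ → Prop) {u : ℕ}
    (h : 2 ≤ phraseLen P (blockString σ m q k n hσ) u) :
    u + phraseLen P (blockString σ m q k n hσ) u ≤ n := by
  have := phraseLen_le P (blockString σ m q k n hσ) u
  rw [length_blockString] at this
  omega

/-- A phrase crossing the first codeword of a block would have an earlier occurrence of that
codeword inside its source. -/
theorem add_phraseLen_lt (hk : 0 < k) (hqm : q ≤ σ ^ m) {P : List (Fin σ) → ℕ → ℕ → Prop}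
    (hP : ∀ i ℓ, 0 < ℓ → P (blockString σ m q k n hσ) i ℓ → PermOv (blockString σ m q k n hσ) i ℓ)
    {x u : ℕ} (hx : x < q) (hu : u ≤ x * k * (2 * m + 3)) :
    u + phraseLen P (blockString σ m q k n hσ) u < x * k * (2 * m + 3) + (2 * m + 3) := by
  by_contra! hlong
  have hℓ : 2 ≤ phraseLen P (blockString σ m q k n hσ) u := by omega
  obtain ⟨v, hv, hseg⟩ := hP _ _ (by omega) (phraseLen_spec P _ hℓ)
  have hend := add_phraseLen_le_of_two_le hσ P hℓ
  have := mul_le_of_letterAt_eq (k := k) (v := v + (x * k * (2 * m + 3) - u)) hqm hx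
    (blockOf_eq hx le_rfl (by omega)) fun t ht => by
      have := letterAt_eq_of_take_drop_eq hσ hend hseg
        (t := x * k * (2 * m + 3) - u + t) (by omega)
      rwa [← Nat.add_assoc, ← Nat.add_assoc, Nat.add_sub_cancel' hu] at this
  omega

theorem exists_le_length_phrasesFrom_add_one (hk : 0 < k) (hqm : q ≤ σ ^ m)
    (hn : q * k * (2 * m + 3) ≤ n) {P : List (Fin σ) → ℕ → ℕ → Prop}
    (hP : ∀ i ℓ, 0 < ℓ → P (blockString σ m q k n hσ) i ℓ → PermOv (blockString σ m q k n hσ) i ℓ)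
    {x g : ℕ} (hx : x < q) (hg : g ≤ x * k * (2 * m + 3)) :
    ∃ w, x * k * (2 * m + 3) < w ∧ w < x * k * (2 * m + 3) + (2 * m + 3) ∧
      (phrasesFrom P (blockString σ m q k n hσ) w).length + 1 ≤
        (phrasesFrom P (blockString σ m q k n hσ) g).length := by
  have hb : x * k * (2 * m + 3) < (blockString σ m q k n hσ).length := by
    have := add_mul_le_of_lt hx hn
    rw [length_blockString]
    nlinarith
  obtain ⟨u, -, hub, hcov, hlen⟩ := exists_phrase_covering P _ hb g hg
  have := length_phrasesFrom_of_lt P _ (hub.trans_lt hb)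
  exact ⟨_, hcov, add_phraseLen_lt hσ hk hqm hP hx hub, by omega⟩

theorem le_zOv_blockString (hk : 0 < k) (hqm : q ≤ σ ^ m) (hn : q * k * (2 * m + 3) ≤ n) :
    q ≤ zOv (blockString σ m q k n hσ) := by
  have := mul_le_length_phrasesFrom (P := PermOv) (s := blockString σ m q k n hσ) (q := q)
    (K := k * (2 * m + 3)) (r := 1) fun x hx g hg => by
      rw [← Nat.mul_assoc] at hg
      obtain ⟨w, -, hw, hlen⟩ :=
        exists_le_length_phrasesFrom_add_one hσ hk hqm hn (fun _ _ _ h => h) hx hg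
      refine ⟨w, ?_, hlen⟩
      rw [Nat.succ_mul, ← Nat.mul_assoc]
      nlinarith
  simpa [zOv, lzPhrases] using this

/-- A longer phrase would contain a whole codeword of block `x`, and its non-overlapping source
would then contain an occurrence of that codeword before the block. -/
theorem phraseLen_permNov_le (hqm : q ≤ σ ^ m) {x u : ℕ}
    (hx : x < q) (hbu : x * k * (2 * m + 3) ≤ u)
    (hu : u + (2 * m + 3) ≤ x * k * (2 * m + 3) + k * (2 * m + 3)) :
    phraseLen PermNov (blockString σ m q k n hσ) u ≤
      u - x * k * (2 * m + 3) + 2 * (2 * m + 3) := by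
  by_contra! hlong
  have hℓ : 2 ≤ phraseLen PermNov (blockString σ m q k n hσ) u := by omega
  obtain ⟨v, hvu, hseg⟩ := phraseLen_spec PermNov _ hℓ
  have hend := add_phraseLen_le_of_two_le hσ PermNov hℓ
  obtain ⟨o, i, ho, hoi⟩ := Nat.exists_add_eq_mul_of_pos (u := u) (p := 2 * m + 3) (by omega)
  have hi : blockOf q k i = x := by
    refine blockOf_eq hx ?_ ?_
    · exact Nat.le_of_mul_le_mul_right (a := x * k) (by omega) (by omega : 0 < 2 * m + 3)
    · refine Nat.lt_of_mul_lt_mul_right (a := 2 * m + 3) ?_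
      rw [Nat.add_mul]
      omega
  have := mul_le_of_letterAt_eq (k := k) (v := v + o) hqm hx hi fun t ht => by
    have := letterAt_eq_of_take_drop_eq hσ hend hseg (t := o + t) (by omega)
    rwa [← Nat.add_assoc, ← Nat.add_assoc, hoi] at this
  omega

/-- By `phraseLen_permNov_le`, each phrase at most doubles
`u - x * k * (2 * m + 3) + 2 * (2 * m + 3)`. -/
theorem exists_add_le_length_phrasesFrom_permNov (hqm : q ≤ σ ^ m)
    (hn : q * k * (2 * m + 3) ≤ n) {x : ℕ} (hx : x < q) (T : ℕ) {u : ℕ}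
    (hbu : x * k * (2 * m + 3) ≤ u)
    (hT : (u - x * k * (2 * m + 3) + 2 * (2 * m + 3)) * 2 ^ T ≤ k * (2 * m + 3)) :
    ∃ w ≤ x * k * (2 * m + 3) + k * (2 * m + 3),
      (phrasesFrom PermNov (blockString σ m q k n hσ) w).length + T ≤
        (phrasesFrom PermNov (blockString σ m q k n hσ) u).length := by
  induction T generalizing u with
  | zero => exact ⟨u, by omega, le_rfl⟩
  | succ T ih =>
    set D := u - x * k * (2 * m + 3) + 2 * (2 * m + 3)
    have hD : 2 * D * 2 ^ T ≤ k * (2 * m + 3) := by rw [pow_succ] at hT; linarith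
    have hDle : D ≤ k * (2 * m + 3) := le_trans (by nlinarith [Nat.one_le_two_pow (n := T)]) hD
    have hℓ := phraseLen_permNov_le hσ (n := n) hqm hx hbu (by omega)
    have hlt : u < (blockString σ m q k n hσ).length := by
      rw [length_blockString]; have := add_mul_le_of_lt hx hn; omega
    obtain ⟨w, hw, hlen⟩ := ih (u := u + phraseLen PermNov (blockString σ m q k n hσ) u)
      (by omega) (le_trans (Nat.mul_le_mul_right _ (by omega)) hD)
    have := length_phrasesFrom_of_lt PermNov _ hlt
    exact ⟨w, hw, by omega⟩

theorem mul_le_zNov_blockString (hqm : q ≤ σ ^ m) (hn : q * k * (2 * m + 3) ≤ n) {T : ℕ}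
    (hT : 3 * 2 ^ T ≤ k) : q * (T + 1) ≤ zNov (blockString σ m q k n hσ) := by
  have hk : 1 ≤ k := le_trans (by have := Nat.one_le_two_pow (n := T); omega) hT
  have := mul_le_length_phrasesFrom (P := PermNov) (s := blockString σ m q k n hσ) (q := q)
    (K := k * (2 * m + 3)) (r := T + 1) fun x hx g hg => by
      rw [← Nat.mul_assoc] at hg
      obtain ⟨w₀, hw₀, hw₀', hlen₀⟩ := exists_le_length_phrasesFrom_add_one (P := PermNov) hσ hk
        hqm hn (fun _ _ hℓ h => h.permOv hℓ) hx hg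
      obtain ⟨w, hw, hlen⟩ := exists_add_le_length_phrasesFrom_permNov hσ hqm hn hx T hw₀.le
        (calc _ ≤ 3 * (2 * m + 3) * 2 ^ T := Nat.mul_le_mul_right _ (by omega)
          _ = 3 * 2 ^ T * (2 * m + 3) := by ring
          _ ≤ k * (2 * m + 3) := Nat.mul_le_mul_right _ hT)
      refine ⟨w, ?_, by omega⟩
      rw [Nat.succ_mul, ← Nat.mul_assoc]
      exact hw
  simpa [zNov, novlzPhrases] using this

theorem permOv_of_codeword_eq {i i' a ℓ u : ℕ} (hi : i' < i) (hu : u = i * (2 * m + 3) + a)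
    (ha : a + ℓ ≤ 2 * m + 3) (hn : u + ℓ ≤ n)
    (h : ∀ j, a ≤ j → j < a + ℓ →
      codeword σ m (blockOf q k i') j = codeword σ m (blockOf q k i) j) :
    PermOv (blockString σ m q k n hσ) u ℓ := by
  have hlt : i' * (2 * m + 3) < i * (2 * m + 3) := Nat.mul_lt_mul_of_pos_right hi (by omega)
  subst hu
  refine ⟨i' * (2 * m + 3) + a, by omega,
    take_drop_eq_of_letterAt_eq hσ hn (by omega) fun t ht => ?_⟩
  rw [Nat.add_assoc, Nat.add_assoc, letterAt_mul_add (by omega), letterAt_mul_add (by omega)]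
  exact h _ (by omega) (by omega)

/-- The rest of a block after its first codeword is copied, with overlap, from one period back. -/
theorem permOv_rest (hk : 0 < k) (hn : q * k * (2 * m + 3) ≤ n) {x : ℕ} (hx : x < q) :
    PermOv (blockString σ m q k n hσ) (x * k * (2 * m + 3) + (2 * m + 3))
      (blockEnd m q k n x - (x * k * (2 * m + 3) + (2 * m + 3))) := by
  have hend := blockEnd_le hx hn
  have hstart := add_mul_le_blockEnd hx hn
  have hkp : 2 * m + 3 ≤ k * (2 * m + 3) := Nat.le_mul_of_pos_left _ hk
  refine ⟨x * k * (2 * m + 3), by omega,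
    take_drop_eq_of_letterAt_eq hσ (by omega) (by omega) fun t ht => ?_⟩
  have hmem : x * k * (2 * m + 3) + t + (2 * m + 3) < x * k * (2 * m + 3) + k * (2 * m + 3) ∨
      x + 1 = q := by
    unfold blockEnd at ht
    split_ifs at ht with hlast
    · exact .inr hlast
    · have : (x + 1) * k * (2 * m + 3) = x * k * (2 * m + 3) + k * (2 * m + 3) := by ring
      exact .inl (by omega)
  rw [letterAt_of_mem_block hk hx (by omega) (hmem.imp_left (by omega)),
    letterAt_of_mem_block hk hx (by omega) (hmem.imp_left (by omega)),
    show x * k * (2 * m + 3) + (2 * m + 3) + t = x * k * (2 * m + 3) + t + (2 * m + 3) by omega,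
    Nat.add_mod_right]

/-- With `e` the number of trailing zero digits of `x ≥ 1`, the codeword of `x` is: a prefix shared
with the codeword of `x - 1`, one letter, and a suffix `1 0 ⋯ 1 0 1` shared with the codeword
of `0`. -/
theorem isParsing_codeword (hk : 0 < k) (hqm : q ≤ σ ^ m) (hn : q * k * (2 * m + 3) ≤ n) {x : ℕ}
    (hx₁ : 1 ≤ x) (hx : x < q) :
    IsParsing PermOv (blockString σ m q k n hσ) (x * k * (2 * m + 3))
      (x * k * (2 * m + 3) + (2 * m + 3)) 3 := by
  obtain ⟨e, w, hw, hxw⟩ := Nat.exists_eq_pow_mul_and_not_dvd (n := x) (by omega) σ (by omega)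
  have hdvd : σ ^ e ∣ x := ⟨w, hxw⟩
  have hndvd : ¬σ ^ (e + 1) ∣ x := by
    rw [hxw, pow_succ]
    exact fun h => hw (Nat.dvd_of_mul_dvd_mul_left (by positivity) h)
  have he : e < m := (Nat.pow_lt_pow_iff_right (by omega)).mp
    ((Nat.le_of_dvd (by omega) hdvd).trans_lt (hx.trans_le hqm))
  have hend := add_mul_le_of_lt hx hn
  have hkp : 2 * m + 3 ≤ k * (2 * m + 3) := Nat.le_mul_of_pos_left _ hk
  have hxk : (x - 1) * k + k = x * k := by
    rw [Nat.sub_one_mul, Nat.sub_add_cancel (Nat.le_mul_of_pos_left k hx₁)]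
  have hblock : blockOf q k (x * k) = x := blockOf_eq hx le_rfl (by omega)
  have hprefix : PermOv (blockString σ m q k n hσ) (x * k * (2 * m + 3)) (2 * (m - 1 - e) + 3) :=
    permOv_of_codeword_eq hσ (i := x * k) (i' := x * k - 1) (by omega) (Nat.add_zero _).symm
      (by omega) (by omega) fun j _ hj => by
        rw [hblock, blockOf_eq (x := x - 1) (by omega) (by omega) (by omega)]
        exact codeword_sub_one hσ hndvd (by omega)
  have hsuffix : PermOv (blockString σ m q k n hσ)
      (x * k * (2 * m + 3) + (2 * (m - 1 - e) + 3) + 1) (2 * e + 1) :=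
    permOv_of_codeword_eq hσ (i := x * k) (i' := 0) (a := 2 * (m - e) + 2) (by omega) (by omega)
      (by omega) (by omega) fun j hj _ => by
        rw [hblock, blockOf_eq (x := 0) (by omega) (by omega) (by omega)]
        exact codeword_zero (by omega) hdvd hj (by omega)
  have := IsParsing.cons (.inr hprefix) (.cons (.inl rfl) (.single hsuffix))
  rwa [show x * k * (2 * m + 3) + (2 * (m - 1 - e) + 3) + 1 + (2 * e + 1) =
    x * k * (2 * m + 3) + (2 * m + 3) by omega] at this

theorem isParsing_rest (hk : 0 < k) (hn : q * k * (2 * m + 3) ≤ n) {x : ℕ} (hx : x < q) :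
    IsParsing PermOv (blockString σ m q k n hσ) (x * k * (2 * m + 3) + (2 * m + 3))
      (blockEnd m q k n x) 1 := by
  have := IsParsing.single (permOv_rest hσ hk hn hx)
  have hkp : 2 * m + 3 ≤ k * (2 * m + 3) := Nat.le_mul_of_pos_left _ hk
  rwa [Nat.add_sub_cancel' (by have := add_mul_le_blockEnd hx hn; omega)] at this

theorem isParsing_block (hk : 0 < k) (hqm : q ≤ σ ^ m) (hn : q * k * (2 * m + 3) ≤ n) {x : ℕ}
    (hx₁ : 1 ≤ x) (hx : x < q) :
    IsParsing PermOv (blockString σ m q k n hσ) (x * k * (2 * m + 3)) (blockEnd m q k n x) 4 :=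
  (isParsing_codeword hσ hk hqm hn hx₁ hx).trans (isParsing_rest hσ hk hn hx)

theorem isParsing_block_zero (hk : 0 < k) (hq : 1 ≤ q) (hn : q * k * (2 * m + 3) ≤ n) :
    IsParsing PermOv (blockString σ m q k n hσ) 0 (blockEnd m q k n 0) (2 * m + 4) := by
  have := isParsing_rest hσ hk hn hq
  rw [Nat.zero_mul, Nat.zero_mul, Nat.zero_add] at this
  have hcodeword := IsParsing.letters (P := PermOv) (s := blockString σ m q k n hσ) 0 (2 * m + 3)
  rw [Nat.zero_add] at hcodeword
  exact hcodeword.trans this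

theorem isParsing_blocks (hk : 0 < k) (hqm : q ≤ σ ^ m) (hn : q * k * (2 * m + 3) ≤ n) (d : ℕ) :
    ∀ x, x + d + 1 = q → 1 ≤ x →
      IsParsing PermOv (blockString σ m q k n hσ) (x * k * (2 * m + 3)) n (4 * (d + 1)) := by
  induction d with
  | zero =>
    intro x hxq hx₁
    have := isParsing_block hσ hk hqm hn hx₁ (by omega)
    rwa [blockEnd, if_pos (by omega)] at this
  | succ d ih =>
    intro x hxq hx₁
    have := isParsing_block hσ hk hqm hn hx₁ (by omega)
    rw [blockEnd, if_neg (by omega)] at this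
    have := this.trans (ih (x + 1) (by omega) (by omega))
    rwa [show 4 + 4 * (d + 1) = 4 * (d + 1 + 1) by ring] at this

theorem zOv_blockString_le (hk : 0 < k) (hq : 1 ≤ q) (hqm : q ≤ σ ^ m)
    (hn : q * k * (2 * m + 3) ≤ n) : zOv (blockString σ m q k n hσ) ≤ 2 * m + 4 + 4 * (q - 1) := by
  have hparse : IsParsing PermOv (blockString σ m q k n hσ) 0 (blockString σ m q k n hσ).length
      (2 * m + 4 + 4 * (q - 1)) := by
    have h₀ := isParsing_block_zero hσ hk hq hn
    rw [length_blockString]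
    unfold blockEnd at h₀
    split_ifs at h₀ with hq₁
    · simpa [show q - 1 = 0 by omega] using h₀
    · have := isParsing_blocks hσ hk hqm hn (q - 2) 1 (by omega) le_rfl
      rw [show q - 1 = q - 2 + 1 by omega]
      exact h₀.trans (by simpa using this)
  exact hparse.length_phrasesFrom_le le_rfl

theorem exists_zOv_zNov_bounds (hσ : 2 ≤ σ) (hq : 1 ≤ q) (hqm : q ≤ σ ^ m) (hmq : m ≤ q)
    (hn : 3 * (q * (2 * m + 3)) ≤ n) :
    ∃ s : List (Fin σ), s.length = n ∧ q ≤ zOv s ∧ zOv s ≤ 6 * q ∧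
      ∃ T : ℕ, n < 2 ^ (T + 4) * (q * (2 * m + 3)) ∧ q * (T + 1) ≤ zNov s := by
  set k := n / (q * (2 * m + 3))
  have hqp : 0 < q * (2 * m + 3) := by positivity
  have hk : 3 ≤ k := (Nat.le_div_iff_mul_le hqp).mpr hn
  have hlayout : q * k * (2 * m + 3) ≤ n :=
    calc q * k * (2 * m + 3) = q * (2 * m + 3) * k := Nat.mul_right_comm _ _ _
      _ ≤ n := Nat.mul_div_le n _
  obtain ⟨T, hT, hkT⟩ : ∃ T, 3 * 2 ^ T ≤ k ∧ k + 1 ≤ 2 ^ (T + 4) := by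
    refine ⟨Nat.log 2 (k / 3), ?_, ?_⟩
    · have := Nat.pow_log_le_self 2 (x := k / 3) (by omega)
      omega
    · have := Nat.lt_pow_succ_log_self (by norm_num : 1 < 2) (k / 3)
      rw [pow_succ] at this
      rw [pow_add]
      omega
  refine ⟨blockString σ m q k n hσ, length_blockString hσ,
    le_zOv_blockString hσ (by omega) hqm hlayout,
    (zOv_blockString_le hσ (by omega) hq hqm hlayout).trans (by omega), T, ?_,
    mul_le_zNov_blockString hσ hqm hlayout hT⟩
  calc n < q * (2 * m + 3) * (k + 1) := Nat.lt_mul_div_succ n hqp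
    _ ≤ q * (2 * m + 3) * 2 ^ (T + 4) := Nat.mul_le_mul_left _ hkT
    _ = 2 ^ (T + 4) * (q * (2 * m + 3)) := Nat.mul_comm _ _

end BlockString

open Real

theorem one_le_logb_of_le {σ z : ℕ} (hσ : 2 ≤ σ) (h : σ ≤ z) : 1 ≤ logb σ z := by
  rw [le_logb_iff_rpow_le (by exact_mod_cast hσ) (by exact_mod_cast (by omega : 0 < z)), rpow_one]
  exact_mod_cast h

theorem mul_logb_le_of_le_div {n σ z : ℕ} (hσ : 2 ≤ σ) (hσn : σ ≤ n) (hσz : σ ≤ z)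
    (hz : (z : ℝ) ≤ n / logb σ n) : z * logb σ z ≤ n := by
  have hlogn := one_le_logb_of_le hσ hσn
  have hzn : (z : ℝ) * logb σ n ≤ n := (le_div_iff₀ (by linarith)).mp hz
  have hzn' : (z : ℝ) ≤ n := by nlinarith
  have : logb σ z ≤ logb σ n :=
    logb_le_logb_of_le (by exact_mod_cast (by omega : 1 < σ)) (by exact_mod_cast (by omega : 0 < z))
      hzn'
  nlinarith

theorem clog_lt_logb_add_one {σ q : ℕ} (hσ : 2 ≤ σ) (hq : 1 ≤ q) :
    (Nat.clog σ q : ℝ) < logb σ q + 1 := by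
  rw [← natCeil_logb_natCast]
  exact Nat.ceil_lt_add_one (logb_nonneg (by exact_mod_cast hσ) (by exact_mod_cast hq))

theorem mul_period_le {σ q z : ℕ} (hσ : 2 ≤ σ) (hσz : σ ≤ z) (hq : 1 ≤ q) (hqz : q ≤ z) {c : ℝ}
    (hc : 0 ≤ c) (hcq : c * q ≤ z) :
    c * ((q * (2 * Nat.clog σ q + 3) : ℕ) : ℝ) ≤ 7 * (z * logb σ z) := by
  have hlog := one_le_logb_of_le hσ hσz
  have hqz : (q : ℝ) ≤ z := by exact_mod_cast hqz
  have hclog := clog_lt_logb_add_one hσ hq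
  have : logb σ q ≤ logb σ z := logb_le_logb_of_le (by exact_mod_cast (by omega : 1 < σ))
    (by exact_mod_cast hq) hqz
  have hp : ((2 * Nat.clog σ q + 3 : ℕ) : ℝ) ≤ 7 * logb σ z := by push_cast; linarith
  calc c * ((q * (2 * Nat.clog σ q + 3) : ℕ) : ℝ) ≤ c * q * (7 * logb σ z) := by
        rw [Nat.cast_mul, ← mul_assoc]; exact mul_le_mul_of_nonneg_left hp (by positivity)
    _ ≤ z * (7 * logb σ z) := mul_le_mul_of_nonneg_right hcq (by linarith)
    _ = 7 * (z * logb σ z) := by ring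

theorem logb_div_lt_of_lt_two_pow {x y : ℝ} {N : ℕ} (hx : 0 < x) (hy : 0 < y) (h : x < 2 ^ N * y) :
    logb 2 (x / y) < N := by
  rw [logb_lt_iff_lt_rpow one_lt_two (by positivity), rpow_natCast, div_lt_iff₀ hy]
  exact h

theorem mul_logb_div_le {x z Λ : ℝ} (hz : 0 < z) (hzΛ : z ≤ Λ) (hx : 0 ≤ x) :
    z * logb 2 (x / Λ) ≤ 2 * x := by
  have hy : 0 ≤ x / Λ := div_nonneg hx (by linarith)
  have hlog : logb 2 (x / Λ) ≤ 2 * (x / Λ) := by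
    rw [logb, div_le_iff₀ (log_pos one_lt_two)]
    have := log_two_gt_d9
    have := log_le_self hy
    nlinarith
  calc z * logb 2 (x / Λ) ≤ z * (2 * (x / Λ)) := mul_le_mul_of_nonneg_left hlog hz.le
    _ = 2 * x * (z / Λ) := by ring
    _ ≤ 2 * x := mul_le_of_le_one_right (by positivity) ((div_le_one (by linarith)).mpr hzΛ)

theorem exists_period_params {n σ z : ℕ} (hσ : 2 ≤ σ) (hσz : σ ≤ z)
    (hΛ : (z : ℝ) * logb σ z ≤ n) (hlarge : 100 ≤ z ∨ 9 ≤ n) :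
    ∃ q m : ℕ, 1 ≤ q ∧ q ≤ σ ^ m ∧ m ≤ q ∧ q ≤ z ∧ z ≤ 200 * q ∧ 3 * (q * (2 * m + 3)) ≤ n ∧
      2 * ((q * (2 * m + 3) : ℕ) : ℝ) ≤ 7 * (z * logb σ z) := by
  set q := max 1 (z / 100)
  have hq : 1 ≤ q := le_max_left _ _
  have hqz : q ≤ z := by omega
  have hmq : Nat.clog σ q ≤ q := (Nat.clog_le_iff_le_pow (by omega)).mpr
    (Nat.lt_two_pow_self.le.trans (Nat.pow_le_pow_left hσ q))
  refine ⟨q, Nat.clog σ q, hq, Nat.le_pow_clog (by omega) q, hmq, hqz, by omega, ?_,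
    mul_period_le hσ hσz hq hqz (c := 2) (by norm_num)
      (by exact_mod_cast (by omega : 2 * q ≤ z))⟩
  by_cases hz : 100 ≤ z
  · have := mul_period_le hσ hσz hq hqz (c := 100) (by norm_num)
      (by exact_mod_cast (by omega : 100 * q ≤ z))
    have : ((3 * (q * (2 * Nat.clog σ q + 3)) : ℕ) : ℝ) ≤ n := by push_cast at this ⊢; linarith
    exact_mod_cast this
  · have hq₁ : q = 1 := by omega
    rw [hq₁, Nat.clog_one_right]
    omega

theorem le_zNov_of_lt_two_pow {x Λ P z q Z : ℝ} {T : ℕ} (hx : 0 < x) (hΛ : 0 < Λ)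
    (hxP : x < 2 ^ (T + 4) * P) (hP : 2 * P ≤ 7 * Λ) (hz : 0 ≤ z) (hzq : z ≤ 200 * q)
    (hZ : q * (T + 1) ≤ Z) : 1 / 1200 * z * logb 2 (x / Λ) ≤ Z := by
  have hL : logb 2 (x / Λ) < (T + 6 : ℕ) := by
    refine logb_div_lt_of_lt_two_pow hx hΛ (hxP.trans_le ?_)
    rw [pow_add, pow_add]
    nlinarith [pow_pos (two_pos (α := ℝ)) T]
  push_cast at hL
  have hq : 0 ≤ q := by linarith
  calc 1 / 1200 * z * logb 2 (x / Λ) ≤ 1 / 1200 * z * (6 * (T + 1)) := by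
        gcongr
        linarith [T.cast_nonneg (α := ℝ)]
    _ ≤ 1 / 1200 * (200 * q) * (6 * (T + 1)) := by gcongr
    _ = q * (T + 1) := by ring
    _ ≤ Z := hZ

theorem exists_string_of_large {n σ z : ℕ} (hσ : 2 ≤ σ) (hσz : σ ≤ z)
    (hΛ : (z : ℝ) * logb σ z ≤ n) (hlarge : 100 ≤ z ∨ 9 ≤ n) :
    ∃ s : List (Fin σ), s.length = n ∧ 1 / 200 * (z : ℝ) ≤ zOv s ∧ (zOv s : ℝ) ≤ 6 * z ∧
      1 / 1200 * (z : ℝ) * logb 2 (n / (z * logb σ z)) ≤ zNov s := by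
  obtain ⟨q, m, hq, hqm, hmq, hqz, hzq, hn, hP⟩ := exists_period_params hσ hσz hΛ hlarge
  obtain ⟨s, hs, hlo, hhi, T, hnT, hnov⟩ := BlockString.exists_zOv_zNov_bounds hσ hq hqm hmq hn
  have hz : (2 : ℝ) ≤ z := by exact_mod_cast hσ.trans hσz
  have hΛpos : (0 : ℝ) < z * logb σ z := by nlinarith [one_le_logb_of_le hσ hσz]
  refine ⟨s, hs, ?_, ?_, ?_⟩
  · have : (z : ℝ) ≤ 200 * zOv s := by exact_mod_cast hzq.trans (by omega)
    linarith
  · have : zOv s ≤ 6 * z := hhi.trans (by omega)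
    exact_mod_cast this
  · exact le_zNov_of_lt_two_pow (q := q) (by linarith) hΛpos (by exact_mod_cast hnT) hP
      (by linarith) (by exact_mod_cast hzq) (by exact_mod_cast hnov)

theorem exists_string_of_small {n σ z : ℕ} (hσ : 2 ≤ σ) (hσz : σ ≤ z) (hn : 0 < n)
    (hz : z < 100) (hn' : n < 9) :
    ∃ s : List (Fin σ), s.length = n ∧ 1 / 200 * (z : ℝ) ≤ zOv s ∧ (zOv s : ℝ) ≤ 6 * z ∧
      1 / 1200 * (z : ℝ) * logb 2 (n / (z * logb σ z)) ≤ zNov s := by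
  set s := List.replicate n (⟨0, by omega⟩ : Fin σ)
  have hs : 0 < s.length := by simpa [s]
  have hOv : 1 ≤ zOv s := one_le_length_phrasesFrom _ _ hs
  have hOv' : zOv s ≤ n := (length_phrasesFrom_le _ _ 0).trans (by simp [s])
  have hNov : 1 ≤ zNov s := one_le_length_phrasesFrom _ _ hs
  have hzr : (2 : ℝ) ≤ z := by exact_mod_cast hσ.trans hσz
  have hL := mul_logb_div_le (x := n) (by linarith) (le_mul_of_one_le_right (by linarith)
    (one_le_logb_of_le hσ hσz)) (Nat.cast_nonneg n)
  refine ⟨s, by simp [s], ?_, ?_, ?_⟩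
  · have : (z : ℝ) ≤ 200 * zOv s := by exact_mod_cast (by omega : z ≤ 200 * zOv s)
    linarith
  · exact_mod_cast (by omega : zOv s ≤ 6 * z)
  · have : (n : ℝ) ≤ 8 := by exact_mod_cast (by omega : n ≤ 8)
    have : (1 : ℝ) ≤ zNov s := by exact_mod_cast hNov
    nlinarith

/-- There are constants `c₁, c₂, c₃ > 0` such that for all integers `n > 1`,
`2 ≤ σ ≤ n` and `σ ≤ z ≤ n / log_σ n`, there is a string `s` of length `n` over an alphabet
of size `σ` with `c₁·z ≤ Zov ≤ c₂·z` and `Znon ≥ c₃ · z · log₂(n / (z · log_σ z))`. -/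
theorem exists_string_zNov_large :
    ∃ c₁ c₂ c₃ : ℝ, 0 < c₁ ∧ 0 < c₂ ∧ 0 < c₃ ∧
      ∀ n σ z : ℕ, 1 < n → 2 ≤ σ → σ ≤ n → σ ≤ z →
        (z : ℝ) ≤ (n : ℝ) / Real.logb (σ : ℝ) (n : ℝ) →
        ∃ s : List (Fin σ), s.length = n ∧
          c₁ * (z : ℝ) ≤ (zOv s : ℝ) ∧ (zOv s : ℝ) ≤ c₂ * (z : ℝ) ∧
          c₃ * (z : ℝ) * Real.logb 2 ((n : ℝ) / ((z : ℝ) * Real.logb (σ : ℝ) (z : ℝ)))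
            ≤ (zNov s : ℝ) := by
  refine ⟨1 / 200, 6, 1 / 1200, by norm_num, by norm_num, by norm_num, ?_⟩
  intro n σ z hn hσ hσn hσz hz
  by_cases hsmall : z < 100 ∧ n < 9
  · exact exists_string_of_small hσ hσz (by omega) hsmall.1 hsmall.2
  · exact exists_string_of_large hσ hσz (mul_logb_le_of_le_div hσ hσn hσz hz) (by omega)
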